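/- Let Φ : ℝ → ℝ be Lipschitz continuous and even (Φ(z) = Φ(−z) for all z), let v > 0 and λ ∈ ℝ, and define f_λ^v(z) := (1+z²)^{3/2}·( v/√(1+z²) − Φ(v/√(1+z²)) + λ ). Let w_B be the maximal solution of w' = f_λ^v(w), w(0) = 0, and w_F the maximal solution of w' = f_λ^{−v}(w), w(0) = 0. Suppose both solutions blow up in finite time: w_B(x) → +∞ as x → (x_B*)⁻ and w_F(x) → +∞ as x → (x_F*)⁻ with 0 < x_B*, x_F* < ∞. Then x_B* < x_F* (the blow-up time of the rear profile is strictly smaller than that of the front profile). -/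

import Mathlib

/-!
Since `Φ` is even, `f_λ^{-v} < f_λ^v` pointwise, so the rear slope `w_B` starts strictly above
the front slope `w_F` and, by the comparison principle, a solution of the front equation started
below `w_B` can never overtake it. As the front equation is autonomous, `w_F` shifted back in time
by a small `δ > 0` is again a solution; started just below `w_B`, it blows up at `x_F* - δ` while
staying below `w_B`, so `w_B` cannot be continued beyond `x_F* - δ`.
-/

open Set Filter

/-- The traveling wave slope nonlinearity
`f_λ^v(z) = (1+z²)^{3/2}·(v/√(1+z²) − Φ(v/√(1+z²)) + λ)`. -/
noncomputable def fTW (Φ : ℝ → ℝ) (lam v z : ℝ) : ℝ :=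
  (1 + z^2) ^ (3/2 : ℝ) *
    (v / Real.sqrt (1 + z^2) - Φ (v / Real.sqrt (1 + z^2)) + lam)

open Topology

lemma HasDerivAt.eventually_gt_nhdsGT {h : ℝ → ℝ} {d x : ℝ} (hd : HasDerivAt h d x)
    (hpos : 0 < d) : ∀ᶠ y in 𝓝[>] x, h x < h y := by
  have hslope : ∀ᶠ y in 𝓝[>] x, 0 < slope h x y :=
    ((hasDerivWithinAt_iff_tendsto_slope' self_notMem_Ioi).mp hd.hasDerivWithinAt).eventually
      (eventually_gt_nhds hpos)
  filter_upwards [hslope, self_mem_nhdsWithin] with y hy hxy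
  rw [slope_def_field, div_pos_iff_of_pos_right (sub_pos.mpr hxy)] at hy
  exact sub_pos.mp hy

section Comparison

variable {f g u w : ℝ → ℝ} {a : ℝ}

lemma le_of_hasDerivAt_of_lt {b : ℝ} (hfg : ∀ z, g z < f z) (ha : u a ≤ w a)
    (hu : ∀ x ∈ Ico a b, HasDerivAt u (g (u x)) x)
    (hw : ∀ x ∈ Ico a b, HasDerivAt w (f (w x)) x) :
    ∀ x ∈ Ico a b, u x ≤ w x := by
  intro x hx
  have hsub : Icc a x ⊆ Ico a b := Icc_subset_Ico_right hx.2
  refine image_le_of_deriv_right_lt_deriv_boundary'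
    (fun y hy => (hu y (hsub hy)).continuousAt.continuousWithinAt)
    (fun y hy => (hu y (hsub (Ico_subset_Icc_self hy))).hasDerivWithinAt) ha
    (fun y hy => (hw y (hsub hy)).continuousAt.continuousWithinAt)
    (fun y hy => (hw y (hsub (Ico_subset_Icc_self hy))).hasDerivWithinAt)
    (fun y _ huw => ?_) ⟨hx.1, le_rfl⟩
  rw [huw]
  exact hfg (w y)

lemma le_of_tendsto_atTop_of_hasDerivAt_of_lt {bu bw : ℝ} (hfg : ∀ z, g z < f z)
    (ha : u a ≤ w a) (hab : a < bu)
    (hu : ∀ x ∈ Ico a bu, HasDerivAt u (g (u x)) x)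
    (hw : ∀ x ∈ Ico a bw, HasDerivAt w (f (w x)) x)
    (hblow : Tendsto u (𝓝[<] bu) atTop) : bw ≤ bu := by
  by_contra! hlt
  have hle : ∀ x ∈ Ico a bu, u x ≤ w x :=
    le_of_hasDerivAt_of_lt hfg ha hu fun x hx => hw x ⟨hx.1, hx.2.trans hlt⟩
  have hw_cont : Tendsto w (𝓝[<] bu) (𝓝 (w bu)) :=
    (hw bu ⟨hab.le, hlt⟩).continuousAt.continuousWithinAt
  have hw_blow : Tendsto w (𝓝[<] bu) atTop :=
    tendsto_atTop_mono' _ (eventually_of_mem (Ico_mem_nhdsLT hab) hle) hblow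
  exact not_tendsto_nhds_of_tendsto_atTop hw_blow _ hw_cont

end Comparison

lemma fTW_neg_lt_fTW {Φ : ℝ → ℝ} (hsym : ∀ z, Φ (-z) = Φ z) {v : ℝ} (hv : 0 < v) (lam z : ℝ) :
    fTW Φ lam (-v) z < fTW Φ lam v z := by
  have hq : 0 < v / Real.sqrt (1 + z ^ 2) := by positivity
  unfold fTW
  rw [neg_div, hsym]
  exact mul_lt_mul_of_pos_left (by linarith) (by positivity)

theorem stmt_6_general (Φ : ℝ → ℝ)
    (hsym : ∀ z, Φ (-z) = Φ z) (v lam : ℝ) (hv : 0 < v)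
    (wB wF : ℝ → ℝ) (xB xF : ℝ) (hxB : 0 < xB) (hxF : 0 < xF)
    (hB0 : wB 0 = 0) (hF0 : wF 0 = 0)
    (hB : ∀ x ∈ Ico (0:ℝ) xB, HasDerivAt wB (fTW Φ lam v (wB x)) x)
    (hF : ∀ x ∈ Ico (0:ℝ) xF, HasDerivAt wF (fTW Φ lam (-v) (wF x)) x)
    (hFblow : Tendsto wF (nhdsWithin xF (Iio xF)) atTop) :
    xB < xF := by
  have hfg := fTW_neg_lt_fTW hsym hv lam
  obtain ⟨x₀, hx₀, hx₀B, hx₀F⟩ : ∃ x₀, wF x₀ < wB x₀ ∧ x₀ ∈ Ioo 0 xB ∧ x₀ ∈ Ioo 0 xF := by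
    have hd := (hB 0 ⟨le_rfl, hxB⟩).sub (hF 0 ⟨le_rfl, hxF⟩)
    have hstart := hd.eventually_gt_nhdsGT (by simpa [hB0, hF0] using hfg 0)
    refine (?_ : ∀ᶠ x in 𝓝[>] (0 : ℝ), _).exists
    filter_upwards [hstart, Ioo_mem_nhdsGT hxB, Ioo_mem_nhdsGT hxF] with x hx hxB' hxF'
    simp only [Pi.sub_apply, hB0, hF0, sub_zero, sub_pos] at hx
    exact ⟨hx, hxB', hxF'⟩
  obtain ⟨y, hy, hyF⟩ : ∃ y, wF y < wB x₀ ∧ y ∈ Ioo x₀ xF := by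
    have hcont : Tendsto wF (𝓝[>] x₀) (𝓝 (wF x₀)) :=
      (hF x₀ ⟨hx₀F.1.le, hx₀F.2⟩).continuousAt.continuousWithinAt
    refine (?_ : ∀ᶠ z in 𝓝[>] x₀, _).exists
    filter_upwards [hcont.eventually_lt_const hx₀, Ioo_mem_nhdsGT hx₀F.2] with z hz hzF
    exact ⟨hz, hzF⟩
  have hshift : xB ≤ xF - (y - x₀) := by
    refine le_of_tendsto_atTop_of_hasDerivAt_of_lt (u := fun x => wF (x + (y - x₀))) hfg
      (by simpa using hy.le) (by linarith [hyF.2]) (fun x hx => ?_)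
      (fun x hx => hB x ⟨hx₀B.1.le.trans hx.1, hx.2⟩) ?_
    · exact (hF _ ⟨by linarith [hx.1, hx₀F.1, hyF.1], by linarith [hx.2]⟩).comp_add_const x _
    · have hmap := (Filter.map_add_right_nhdsLT (c := y - x₀) (a := xF - (y - x₀))).le
      rw [sub_add_cancel] at hmap
      exact hFblow.comp hmap
  linarith [hyF.1]

/-- for Lipschitz even `Φ`, `v > 0` and any `λ`, if the back slope solution
`w_B' = f_λ^v(w_B)`, `w_B(0)=0`, blows up (to `+∞`) at the finite time `x_B* > 0` and the
front slope solution `w_F' = f_λ^{-v}(w_F)`, `w_F(0)=0`, blows up at the finite time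
`x_F* > 0`, then `x_B* < x_F*`. -/
theorem stmt_6 (Φ : ℝ → ℝ) (K : NNReal) (hΦ : LipschitzWith K Φ)
    (hsym : ∀ z, Φ (-z) = Φ z) (v lam : ℝ) (hv : 0 < v)
    (wB wF : ℝ → ℝ) (xB xF : ℝ) (hxB : 0 < xB) (hxF : 0 < xF)
    (hB0 : wB 0 = 0) (hF0 : wF 0 = 0)
    (hB : ∀ x ∈ Ico (0:ℝ) xB, HasDerivAt wB (fTW Φ lam v (wB x)) x)
    (hF : ∀ x ∈ Ico (0:ℝ) xF, HasDerivAt wF (fTW Φ lam (-v) (wF x)) x)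
    (hBblow : Tendsto wB (nhdsWithin xB (Iio xB)) atTop)
    (hFblow : Tendsto wF (nhdsWithin xF (Iio xF)) atTop) :
    xB < xF :=
  stmt_6_general Φ hsym v lam hv wB wF xB xF hxB hxF hB0 hF0 hB hF hFblow
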